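/- Let X ⊆ ℝⁿ be a nonempty convex compact set with κ = max_{x∈X} ‖x‖₂ > 0 and C = cone({κ} × X) ⊆ ℝ^{n+1}. Let positive weights (ω_t), losses f_t ∈ ℝⁿ with ‖f_t‖₂ ≤ L, and decisions x_t ∈ X for t = 1,…,T, with v_t = (⟨f_t, x_t⟩/κ, −f_t), CBA iterates u_0 = 0 and u_t = u_{t−1} + ω_t v_t, and the CBA choice rule: for every t there exists α_t ≥ 0 with π_C(u_{t−1}) = α_t · (κ, x_t). Then the weighted average regret satisfies (∑_{t=1}^T ω_t ⟨f_t, x_t⟩ − inf_{x∈X} ∑_{t=1}^T ω_t ⟨f_t, x⟩) / (∑_{t=1}^T ω_t) ≤ 2 κ L √(∑_{t=1}^T ω_t²) / (∑_{t=1}^T ω_t). -/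

import Mathlib

set_option autoImplicit false

/-!
The regret of the decisions against a fixed `y ∈ X` equals `⟪u_T, (κ, y)⟫`, and since
`(κ, y) ∈ C` this is at most `d(u_T, C°) · ‖(κ, y)‖ ≤ d(u_T, C°) · √2 κ`. The choice rule makes
`(κ, x_t)`, hence `π_C(u_{t-1})`, orthogonal to `v_t`; by Moreau's decomposition
`u - π_C(u) ∈ C°` and `‖π_C(u)‖ ≤ d(u, C°)`, so `d(u_t, C°)² ≤ d(u_{t-1}, C°)² + ω_t² ‖v_t‖²`
with `‖v_t‖ ≤ √2 L`. Summing gives `d(u_T, C°) ≤ √2 L √(∑ ω_t²)`.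
-/

open scoped RealInnerProductSpace
open Finset

noncomputable section

/-- The lifted vector `(t, y) ∈ ℝ × ℝⁿ = ℝ^{n+1}`. -/
def pr {n : ℕ} (t : ℝ) (y : EuclideanSpace ℝ (Fin n)) :
    EuclideanSpace ℝ (Fin (n + 1)) :=
  WithLp.toLp 2 (Fin.cons t (fun i => y i) : Fin (n + 1) → ℝ)

/-- The conic hull `cone({κ} × X) = {α • (κ, x) : α ≥ 0, x ∈ X}`. -/
def coneLift {n : ℕ} (κ : ℝ) (X : Set (EuclideanSpace ℝ (Fin n))) :
    Set (EuclideanSpace ℝ (Fin (n + 1))) :=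
  {u | ∃ α : ℝ, 0 ≤ α ∧ ∃ x ∈ X, u = α • pr κ x}

/-- The polar cone `C° = {z : ⟨z, w⟩ ≤ 0 ∀ w ∈ C}`. -/
def polarCone {E : Type*} [NormedAddCommGroup E] [InnerProductSpace ℝ E]
    (C : Set E) : Set E :=
  {z | ∀ w ∈ C, ⟪z, w⟫ ≤ 0}

/-- `p` is the Euclidean orthogonal projection of `u` onto the set `S`. -/
def IsProjOn {E : Type*} [NormedAddCommGroup E] [InnerProductSpace ℝ E]
    (u : E) (S : Set E) (p : E) : Prop :=
  p ∈ S ∧ ∀ z ∈ S, dist u p ≤ dist u z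

theorem eq_sum_Icc_of_eq_add {M : Type*} [AddCommMonoid M] {u w : ℕ → M} (hu0 : u 0 = 0) :
    ∀ {T : ℕ}, (∀ t ∈ Icc 1 T, u t = u (t - 1) + w t) → u T = ∑ t ∈ Icc 1 T, w t
  | 0, _ => by simp [hu0]
  | T + 1, hu => by
    rw [sum_Icc_succ_top (by omega), hu (T + 1) (by simp), Nat.add_sub_cancel,
      eq_sum_Icc_of_eq_add hu0 fun t ht => hu t (Icc_subset_Icc_right T.le_succ ht)]

section ProjectionOntoCone

variable {E : Type*} [NormedAddCommGroup E] [InnerProductSpace ℝ E]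

theorem zero_mem_polarCone (C : Set E) : (0 : E) ∈ polarCone C :=
  fun w _ => by simp

theorem IsProjOn.inner_sub_le_zero {u p : E} {S : Set E} (hS : Convex ℝ S)
    (h : IsProjOn u S p) : ∀ w ∈ S, ⟪u - p, w - p⟫ ≤ 0 := by
  obtain ⟨hp, hmin⟩ := h
  rw [← norm_eq_iInf_iff_real_inner_le_zero hS hp]
  have : Nonempty S := ⟨⟨p, hp⟩⟩
  refine le_antisymm (le_ciInf fun z => by simpa [dist_eq_norm] using hmin z z.2) ?_
  exact ciInf_le ⟨0, Set.forall_mem_range.2 fun _ => norm_nonneg _⟩ (⟨p, hp⟩ : S)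

theorem inner_le_norm_sub_mul_norm_of_mem_polarCone {C : Set E} {z w : E}
    (hz : z ∈ polarCone C) (hw : w ∈ C) (u : E) : ⟪u, w⟫ ≤ ‖u - z‖ * ‖w‖ :=
  calc ⟪u, w⟫ = ⟪u - z, w⟫ + ⟪z, w⟫ := by rw [inner_sub_left, sub_add_cancel]
    _ ≤ ⟪u - z, w⟫ := add_le_of_nonpos_right (hz w hw)
    _ ≤ ‖u - z‖ * ‖w‖ := real_inner_le_norm _ _

variable {C : Set E} (hC : Convex ℝ C) (hCsmul : ∀ c : ℝ, 0 ≤ c → ∀ w ∈ C, c • w ∈ C)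
include hC hCsmul

theorem IsProjOn.inner_sub_self_eq_zero {u p : E} (h : IsProjOn u C p) : ⟪u - p, p⟫ = 0 := by
  have hvar := h.inner_sub_le_zero hC
  have hzero := hvar 0 (by simpa using hCsmul 0 le_rfl p h.1)
  have htwo := hvar ((2 : ℝ) • p) (hCsmul 2 zero_le_two p h.1)
  rw [zero_sub, inner_neg_right] at hzero
  rw [two_smul, add_sub_cancel_right] at htwo
  linarith

theorem IsProjOn.sub_mem_polarCone {u p : E} (h : IsProjOn u C p) : u - p ∈ polarCone C := by
  intro w hw
  have := h.inner_sub_le_zero hC w hw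
  rw [inner_sub_right, h.inner_sub_self_eq_zero hC hCsmul] at this
  linarith

theorem IsProjOn.norm_sq_le_norm_sub_sq {u p z : E} (h : IsProjOn u C p)
    (hz : z ∈ polarCone C) : ‖p‖ ^ 2 ≤ ‖u - z‖ ^ 2 := by
  have horth : ⟪p, u - p⟫ = 0 := by
    rw [real_inner_comm]; exact h.inner_sub_self_eq_zero hC hCsmul
  have hzp : ⟪p, z⟫ ≤ 0 := by rw [real_inner_comm]; exact hz p h.1
  rw [show u - z = p + ((u - p) - z) by abel, norm_add_sq_real, inner_sub_right, horth]
  nlinarith [sq_nonneg ‖u - p - z‖]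

theorem exists_mem_polarCone_norm_sub_sq_le {u w : ℕ → E} (hu0 : u 0 = 0) :
    ∀ {T : ℕ}, (∀ t ∈ Icc 1 T, u t = u (t - 1) + w t) →
      (∀ t ∈ Icc 1 T, ∃ p, IsProjOn (u (t - 1)) C p ∧ ⟪p, w t⟫ = 0) →
      ∃ z ∈ polarCone C, ‖u T - z‖ ^ 2 ≤ ∑ t ∈ Icc 1 T, ‖w t‖ ^ 2
  | 0, _, _ => ⟨0, zero_mem_polarCone C, by simp [hu0]⟩
  | T + 1, hu, hproj => by
    have hrestrict {t : ℕ} (ht : t ∈ Icc 1 T) : t ∈ Icc 1 (T + 1) :=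
      Icc_subset_Icc_right T.le_succ ht
    obtain ⟨z, hz, hdist⟩ := exists_mem_polarCone_norm_sub_sq_le hu0
      (fun t ht => hu t (hrestrict ht)) (fun t ht => hproj t (hrestrict ht))
    obtain ⟨p, hp, hpw⟩ := hproj (T + 1) (by simp)
    rw [Nat.add_sub_cancel] at hp
    refine ⟨u T - p, hp.sub_mem_polarCone hC hCsmul, ?_⟩
    have hstep : u (T + 1) - (u T - p) = p + w (T + 1) := by
      rw [hu (T + 1) (by simp), Nat.add_sub_cancel]; abel
    rw [hstep, norm_add_sq_real, hpw, sum_Icc_succ_top (by omega)]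
    linarith [hp.norm_sq_le_norm_sub_sq hC hCsmul hz]

end ProjectionOntoCone

theorem pr_add {n : ℕ} (s t : ℝ) (y z : EuclideanSpace ℝ (Fin n)) :
    pr s y + pr t z = pr (s + t) (y + z) := by
  ext i; refine Fin.cases ?_ (fun j => ?_) i <;> simp [pr]

theorem smul_pr {n : ℕ} (c t : ℝ) (y : EuclideanSpace ℝ (Fin n)) :
    c • pr t y = pr (c * t) (c • y) := by
  ext i; refine Fin.cases ?_ (fun j => ?_) i <;> simp [pr]

theorem inner_pr_pr {n : ℕ} (s t : ℝ) (y z : EuclideanSpace ℝ (Fin n)) :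
    ⟪pr s y, pr t z⟫ = s * t + ⟪y, z⟫ := by
  simp only [PiLp.inner_apply, RCLike.inner_apply, starRingEnd_apply, star_trivial]
  rw [Fin.sum_univ_succ]
  simp [pr, mul_comm]

theorem norm_pr_sq {n : ℕ} (t : ℝ) (y : EuclideanSpace ℝ (Fin n)) :
    ‖pr t y‖ ^ 2 = t ^ 2 + ‖y‖ ^ 2 := by
  rw [← real_inner_self_eq_norm_sq, ← real_inner_self_eq_norm_sq, inner_pr_pr, sq]

section Payoff

variable {n : ℕ} {κ : ℝ} (f : EuclideanSpace ℝ (Fin n))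

theorem inner_pr_payoff (x : EuclideanSpace ℝ (Fin n)) (hκ : κ ≠ 0) (y : EuclideanSpace ℝ (Fin n)) :
    ⟪pr (⟪f, x⟫ / κ) (-f), pr κ y⟫ = ⟪f, x⟫ - ⟪f, y⟫ := by
  rw [inner_pr_pr, inner_neg_left, div_mul_cancel₀ _ hκ, sub_eq_add_neg]

theorem norm_pr_payoff_sq_le (hκ : 0 < κ) {x : EuclideanSpace ℝ (Fin n)} (hx : ‖x‖ ≤ κ) :
    ‖pr (⟪f, x⟫ / κ) (-f)‖ ^ 2 ≤ 2 * ‖f‖ ^ 2 := by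
  have hfx : |⟪f, x⟫ / κ| ≤ ‖f‖ := by
    rw [abs_div, abs_of_pos hκ, div_le_iff₀ hκ]
    exact (abs_real_inner_le_norm f x).trans (mul_le_mul_of_nonneg_left hx (norm_nonneg f))
  rw [norm_pr_sq, norm_neg, ← sq_abs (⟪f, x⟫ / κ)]
  nlinarith [abs_nonneg (⟪f, x⟫ / κ)]

end Payoff

theorem norm_pr_sq_le {n : ℕ} {κ : ℝ} {y : EuclideanSpace ℝ (Fin n)} (hy : ‖y‖ ≤ κ) :
    ‖pr κ y‖ ^ 2 ≤ 2 * κ ^ 2 := by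
  rw [norm_pr_sq]
  nlinarith [norm_nonneg y]

theorem pr_mem_coneLift {n : ℕ} (κ : ℝ) {X : Set (EuclideanSpace ℝ (Fin n))} {x}
    (hx : x ∈ X) : pr κ x ∈ coneLift κ X :=
  ⟨1, zero_le_one, x, hx, (one_smul ℝ _).symm⟩

theorem smul_mem_coneLift {n : ℕ} {κ : ℝ} {X : Set (EuclideanSpace ℝ (Fin n))} {c : ℝ}
    (hc : 0 ≤ c) {w : EuclideanSpace ℝ (Fin (n + 1))} (hw : w ∈ coneLift κ X) :
    c • w ∈ coneLift κ X := by
  obtain ⟨α, hα, x, hx, rfl⟩ := hw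
  exact ⟨c * α, mul_nonneg hc hα, x, hx, smul_smul c α _⟩

theorem convex_coneLift {n : ℕ} (κ : ℝ) {X : Set (EuclideanSpace ℝ (Fin n))}
    (hX : Convex ℝ X) : Convex ℝ (coneLift κ X) := by
  rintro _ ⟨α₁, hα₁, x₁, hx₁, rfl⟩ _ ⟨α₂, hα₂, x₂, hx₂, rfl⟩ a b ha hb hab
  have h₁ : 0 ≤ a * α₁ := mul_nonneg ha hα₁
  have h₂ : 0 ≤ b * α₂ := mul_nonneg hb hα₂
  rw [smul_smul, smul_smul]
  rcases (add_nonneg h₁ h₂).eq_or_lt with hβ | hβ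
  · rw [(add_eq_zero_iff_of_nonneg h₁ h₂).1 hβ.symm |>.1,
      (add_eq_zero_iff_of_nonneg h₁ h₂).1 hβ.symm |>.2, zero_smul, zero_smul, add_zero]
    exact ⟨0, le_rfl, x₁, hx₁, (zero_smul ℝ _).symm⟩
  -- `a α₁ (κ, x₁) + b α₂ (κ, x₂) = β (κ, x)` with `β = a α₁ + b α₂` and `x` a convex combination
  refine ⟨a * α₁ + b * α₂, hβ.le, (a * α₁ / (a * α₁ + b * α₂)) • x₁ +
      (b * α₂ / (a * α₁ + b * α₂)) • x₂, hX hx₁ hx₂ (by positivity) (by positivity)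
      (by field_simp), ?_⟩
  rw [smul_pr, smul_pr, smul_pr, pr_add]
  congr 1
  · ring
  · match_scalars <;> field_simp

theorem stmt5_general {n : ℕ} (X : Set (EuclideanSpace ℝ (Fin n)))
    (hXne : X.Nonempty) (hXcv : Convex ℝ X)
    (κ : ℝ) (hκ : IsGreatest ((fun x => ‖x‖) '' X) κ) (hκpos : 0 < κ)
    (T : ℕ) (hT : 1 ≤ T) (ω : ℕ → ℝ) (hω : ∀ t ∈ Icc 1 T, 0 < ω t)
    (f x : ℕ → EuclideanSpace ℝ (Fin n)) (hx : ∀ t ∈ Icc 1 T, x t ∈ X)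
    (L : ℝ) (hL : ∀ t ∈ Icc 1 T, ‖f t‖ ≤ L)
    (v : ℕ → EuclideanSpace ℝ (Fin (n + 1)))
    (hv : ∀ t, v t = pr (⟪f t, x t⟫ / κ) (-(f t)))
    (u : ℕ → EuclideanSpace ℝ (Fin (n + 1)))
    (hu0 : u 0 = 0) (hu : ∀ t ∈ Icc 1 T, u t = u (t - 1) + ω t • v t)
    (hchoice : ∀ t ∈ Icc 1 T, ∃ α : ℝ, 0 ≤ α ∧
      IsProjOn (u (t - 1)) (coneLift κ X) (α • pr κ (x t))) :
    ((∑ t ∈ Icc 1 T, ω t * ⟪f t, x t⟫)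
          - ⨅ xx : X, ∑ t ∈ Icc 1 T, ω t * ⟪f t, (xx : EuclideanSpace ℝ (Fin n))⟫)
        / (∑ t ∈ Icc 1 T, ω t)
      ≤ 2 * κ * L * Real.sqrt (∑ t ∈ Icc 1 T, ω t ^ 2) / (∑ t ∈ Icc 1 T, ω t) := by
  set S := ∑ t ∈ Icc 1 T, ω t ^ 2
  have hL0 : 0 ≤ L := (norm_nonneg _).trans (hL 1 (by simp [hT]))
  have hxκ (t : ℕ) (ht : t ∈ Icc 1 T) : ‖x t‖ ≤ κ := hκ.2 ⟨x t, hx t ht, rfl⟩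
  obtain ⟨z, hz, hdist⟩ := exists_mem_polarCone_norm_sub_sq_le (convex_coneLift κ hXcv)
    (fun _ hc _ hw => smul_mem_coneLift hc hw) hu0 hu fun t ht => by
      obtain ⟨α, -, hproj⟩ := hchoice t ht
      refine ⟨_, hproj, ?_⟩
      rw [real_inner_smul_left, real_inner_smul_right, real_inner_comm, hv,
        inner_pr_payoff _ _ hκpos.ne', sub_self, mul_zero, mul_zero]
  have hpayoff : ∑ t ∈ Icc 1 T, ‖ω t • v t‖ ^ 2 ≤ 2 * L ^ 2 * S := by
    rw [mul_sum]
    refine sum_le_sum fun t ht => ?_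
    rw [norm_smul, mul_pow, Real.norm_eq_abs, sq_abs, hv]
    calc _ ≤ ω t ^ 2 * (2 * ‖f t‖ ^ 2) := by gcongr; exact norm_pr_payoff_sq_le _ hκpos (hxκ t ht)
      _ ≤ ω t ^ 2 * (2 * L ^ 2) := by gcongr; exact hL t ht
      _ = 2 * L ^ 2 * ω t ^ 2 := by ring
  have hregret (y : EuclideanSpace ℝ (Fin n)) (hy : y ∈ X) :
      ∑ t ∈ Icc 1 T, ω t * ⟪f t, x t⟫ - ∑ t ∈ Icc 1 T, ω t * ⟪f t, y⟫ ≤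
        2 * κ * L * Real.sqrt S := by
    calc _ = ⟪u T, pr κ y⟫ := by
          rw [eq_sum_Icc_of_eq_add hu0 hu, sum_inner, ← sum_sub_distrib]
          refine sum_congr rfl fun t _ => ?_
          rw [real_inner_smul_left, hv, inner_pr_payoff _ _ hκpos.ne', mul_sub]
      _ ≤ ‖u T - z‖ * ‖pr κ y‖ :=
          inner_le_norm_sub_mul_norm_of_mem_polarCone hz (pr_mem_coneLift κ hy) _
      _ ≤ 2 * κ * L * Real.sqrt S := by
          refine (pow_le_pow_iff_left₀ (by positivity) (by positivity) two_ne_zero).1 ?_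
          rw [mul_pow, mul_pow, mul_pow, Real.sq_sqrt (sum_nonneg fun t _ => sq_nonneg _)]
          have := mul_le_mul (hdist.trans hpayoff) (norm_pr_sq_le (hκ.2 ⟨y, hy, rfl⟩))
            (sq_nonneg _) (by positivity)
          linarith
  have : Nonempty X := hXne.to_subtype
  exact div_le_div_of_nonneg_right (sub_le_comm.1 (le_ciInf fun y => sub_le_comm.1 (hregret y y.2)))
    (sum_nonneg fun t ht => (hω t ht).le)

/-- Theorem 2, CBA regret bound: with iterates
`u_t = u_{t-1} + ω_t v_t` and decisions chosen by the CBA rule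
`π_C(u_{t-1}) = α_t • (κ, x_t)`, the weighted average regret is at most
`2 κ L √(∑ ω_t²) / (∑ ω_t)`. -/
theorem stmt5 {n : ℕ} (X : Set (EuclideanSpace ℝ (Fin n)))
    (hXne : X.Nonempty) (hXcv : Convex ℝ X) (hXcp : IsCompact X)
    (κ : ℝ) (hκ : IsGreatest ((fun x => ‖x‖) '' X) κ) (hκpos : 0 < κ)
    (T : ℕ) (hT : 1 ≤ T) (ω : ℕ → ℝ) (hω : ∀ t ∈ Icc 1 T, 0 < ω t)
    (f x : ℕ → EuclideanSpace ℝ (Fin n)) (hx : ∀ t ∈ Icc 1 T, x t ∈ X)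
    (L : ℝ) (hL : ∀ t ∈ Icc 1 T, ‖f t‖ ≤ L)
    (v : ℕ → EuclideanSpace ℝ (Fin (n + 1)))
    (hv : ∀ t, v t = pr (⟪f t, x t⟫ / κ) (-(f t)))
    (u : ℕ → EuclideanSpace ℝ (Fin (n + 1)))
    (hu0 : u 0 = 0) (hu : ∀ t ∈ Icc 1 T, u t = u (t - 1) + ω t • v t)
    (hchoice : ∀ t ∈ Icc 1 T, ∃ α : ℝ, 0 ≤ α ∧
      IsProjOn (u (t - 1)) (coneLift κ X) (α • pr κ (x t))) :
    ((∑ t ∈ Icc 1 T, ω t * ⟪f t, x t⟫)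
          - ⨅ xx : X, ∑ t ∈ Icc 1 T, ω t * ⟪f t, (xx : EuclideanSpace ℝ (Fin n))⟫)
        / (∑ t ∈ Icc 1 T, ω t)
      ≤ 2 * κ * L * Real.sqrt (∑ t ∈ Icc 1 T, ω t ^ 2) / (∑ t ∈ Icc 1 T, ω t) :=
  stmt5_general X hXne hXcv κ hκ hκpos T hT ω hω f x hx L hL v hv u hu0 hu hchoice

end
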